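/- arXiv:1610.02117 — 4 statements merged into one kernel-verified Lean document; each statement's English description precedes it below -/
import Mathlib

section
/- Let Q(z) = Σ_{i=-D}^{D} q_i z^i be a Laurent polynomial of degree D with complex coefficients. Then Q(z) is real and nonnegative for every complex z with |z| = 1 if and only if there exists a complex polynomial P(z) = Σ_{i=0}^{D} p_i z^i of degree at most D such that Q(z) = P(z) · conj(P(1/conj(z))) for all nonzero complex z. -/
/-!
The Cayley transform `t ↦ (1 + i t) / (1 - i t)` maps `ℝ` onto the unit circle minus `-1`.
Clearing denominators, `(1 + t²) ^ D * Q (cayley t)` is a polynomial in `t` which is nonnegative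
on `ℝ`, hence of the form `S * conj S`: its non-real roots come in conjugate pairs and its real
roots have even multiplicity. Pulling `S` back along the inverse Cayley transform gives `P` of
degree at most `D` with `Q = |P|²` on the circle. Then `z ^ D * Q z` and
`P z * z ^ D * conj (P (1 / conj z))` are polynomials agreeing at infinitely many points, hence
everywhere.
-/

open Polynomial Complex ComplexConjugate ComplexOrder

namespace Polynomial

theorem eval_nonneg_of_eval_mul_nonneg {g h : ℝ[X]} (hg0 : g ≠ 0) (hg : ∀ t, 0 ≤ g.eval t)
    (hgh : ∀ t, 0 ≤ (g * h).eval t) (t : ℝ) : 0 ≤ h.eval t := by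
  have hdense : Dense {x | g.IsRoot x}ᶜ := (finite_setOfPred_isRoot hg0).countable.dense_compl ℝ
  refine hdense.induction (fun x hx => ?_) (isClosed_le continuous_const h.continuous) t
  have hx' := hgh x
  rw [eval_mul] at hx'
  exact nonneg_of_mul_nonneg_right hx' ((hg x).lt_of_ne' hx)

theorem sq_X_sub_C_dvd_of_eval_nonneg {p : ℝ[X]} (hp : ∀ t, 0 ≤ p.eval t) {a : ℝ}
    (ha : p.IsRoot a) : (X - C a) ^ 2 ∣ p := by
  rcases eq_or_ne p 0 with rfl | hp0
  · simp
  have hmin : IsMinOn (fun t => p.eval t) Set.univ a := fun t _ => by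
    simpa [ha.eq_zero] using hp t
  have hder : p.derivative.IsRoot a := by
    simpa using (hmin.isLocalMin Filter.univ_mem).deriv_eq_zero
  rw [← le_rootMultiplicity_iff hp0]
  exact (one_lt_rootMultiplicity_iff_isRoot hp0).mpr ⟨ha, hder⟩

noncomputable def normSqSub (z : ℂ) : ℝ[X] := X ^ 2 - C (2 * z.re) * X + C (‖z‖ ^ 2)

theorem eval_normSqSub (z : ℂ) (t : ℝ) : (normSqSub z).eval t = ‖(t : ℂ) - z‖ ^ 2 := by
  simp only [normSqSub, ← normSq_eq_norm_sq, normSq_apply, eval_add, eval_sub, eval_mul, eval_pow,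
    eval_X, eval_C, sub_re, sub_im, ofReal_re, ofReal_im]
  ring

theorem map_normSqSub (z : ℂ) :
    (normSqSub z).map (algebraMap ℝ ℂ) = (X - C z) * (X - C z).map (starRingEnd ℂ) := by
  simp only [normSqSub, Polynomial.map_add, Polynomial.map_sub, Polynomial.map_mul,
    Polynomial.map_pow, map_X, map_C, Complex.coe_algebraMap, ofReal_pow]
  rw [← add_conj, ← mul_conj', C_add, C_mul]
  ring

theorem monic_normSqSub (z : ℂ) : (normSqSub z).Monic := by
  unfold normSqSub; monicity!

theorem natDegree_normSqSub (z : ℂ) : (normSqSub z).natDegree = 2 := by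
  unfold normSqSub; compute_degree!

theorem normSqSub_dvd_of_eval_nonneg {p : ℝ[X]} (hp : ∀ t, 0 ≤ p.eval t) {z : ℂ}
    (hz : aeval z p = 0) : normSqSub z ∣ p := by
  by_cases him : z.im = 0
  · have hsq : normSqSub z = (X - C z.re) ^ 2 := by
      rw [normSqSub, ← normSq_eq_norm_sq, normSq_apply, him, mul_zero, add_zero, C_mul, C_mul,
        C_ofNat]
      ring
    have hre : z = algebraMap ℝ ℂ z.re := Complex.ext rfl (by simp [him])
    rw [hsq]
    refine sq_X_sub_C_dvd_of_eval_nonneg hp ?_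
    rwa [hre, aeval_algebraMap_apply, map_eq_zero] at hz
  · exact p.quadratic_dvd_of_aeval_eq_zero_im_ne_zero hz him

theorem exists_eq_mul_map_conj_of_eval_nonneg {p : ℝ[X]} (hp : ∀ t, 0 ≤ p.eval t) :
    ∃ s : ℂ[X], p.map (algebraMap ℝ ℂ) = s * s.map (starRingEnd ℂ) := by
  induction hn : p.natDegree using Nat.strong_induction_on generalizing p with
  | _ n ih =>
  rcases Nat.eq_zero_or_pos n with rfl | hpos
  · obtain ⟨c, rfl⟩ := natDegree_eq_zero.mp hn
    have hc : 0 ≤ c := by simpa using hp 0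
    refine ⟨C (Real.sqrt c : ℂ), ?_⟩
    rw [map_C, map_C, ← C_mul, conj_ofReal, ← ofReal_mul, Real.mul_self_sqrt hc]
    rfl
  obtain ⟨z, hz⟩ := IsAlgClosed.exists_aeval_eq_zero ℂ p
    (natDegree_pos_iff_degree_pos.mp (hn ▸ hpos)).ne'
  obtain ⟨h, rfl⟩ := normSqSub_dvd_of_eval_nonneg hp hz
  have hg := monic_normSqSub z
  have hh : h ≠ 0 := by rintro rfl; simp at hn; omega
  obtain ⟨s, hs⟩ := ih h.natDegree
    (by rw [← hn, natDegree_mul hg.ne_zero hh, natDegree_normSqSub]; omega)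
    (eval_nonneg_of_eval_mul_nonneg hg.ne_zero (fun t => by rw [eval_normSqSub]; positivity) hp)
    rfl
  refine ⟨(X - C z) * s, ?_⟩
  rw [Polynomial.map_mul, map_normSqSub, hs, Polynomial.map_mul]
  ring

theorem eval_map_conj (p : ℂ[X]) (z : ℂ) :
    (p.map (starRingEnd ℂ)).eval z = conj (p.eval (conj z)) := by
  rw [eval_map, ← eval₂_at_apply, conj_conj]

theorem mem_lifts_of_conj_eval_ofReal {p : ℂ[X]}
    (hp : ∀ t : ℝ, conj (p.eval (t : ℂ)) = p.eval (t : ℂ)) : p ∈ lifts (algebraMap ℝ ℂ) := by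
  have hconj : p.map (starRingEnd ℂ) = p := by
    refine eq_of_infinite_eval_eq _ _ ((Set.infinite_range_of_injective ofReal_injective).mono ?_)
    rintro _ ⟨t, rfl⟩
    simp only [Set.mem_ofPred_eq, eval_map_conj, conj_ofReal, hp]
  rw [lifts_iff_coeff_lifts]
  intro n
  have := congrArg (coeff · n) hconj
  simp only [coeff_map] at this
  exact conj_eq_iff_real.mp this |>.imp fun r hr => hr.symm

theorem exists_eq_mul_map_conj_of_eval_ofReal_nonneg {p : ℂ[X]}
    (hp : ∀ t : ℝ, 0 ≤ p.eval (t : ℂ)) : ∃ s : ℂ[X], p = s * s.map (starRingEnd ℂ) := by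
  have hreal : ∀ t : ℝ, conj (p.eval (t : ℂ)) = p.eval (t : ℂ) := fun t =>
    conj_eq_iff_im.mpr (nonneg_iff.mp (hp t)).2.symm
  obtain ⟨r, rfl⟩ := (mem_lifts _).mp (mem_lifts_of_conj_eval_ofReal hreal)
  refine exists_eq_mul_map_conj_of_eval_nonneg fun t => ?_
  have := hp t
  rwa [← coe_algebraMap, eval_map_algebraMap, aeval_algebraMap_apply, coe_algebraMap,
    zero_le_real] at this

theorem natDegree_mul_map_conj (s : ℂ[X]) :
    (s * s.map (starRingEnd ℂ)).natDegree = 2 * s.natDegree := by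
  rcases eq_or_ne s 0 with rfl | hs
  · simp
  rw [natDegree_mul hs (Polynomial.map_ne_zero hs), natDegree_map]
  ring

section homogComp

variable {R : Type*} [Semiring R]

/-- `b ^ n * f (a / b)` with the denominators cleared. -/
noncomputable def homogComp (n : ℕ) (f a b : R[X]) : R[X] :=
  ∑ k ∈ Finset.range (n + 1), C (f.coeff k) * a ^ k * b ^ (n - k)

theorem natDegree_homogComp_le {n : ℕ} {f a b : R[X]} (ha : a.natDegree ≤ 1)
    (hb : b.natDegree ≤ 1) : (homogComp n f a b).natDegree ≤ n := by
  refine natDegree_sum_le_of_forall_le _ _ fun k hk => ?_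
  have hk : k ≤ n := Nat.lt_succ_iff.mp (Finset.mem_range.mp hk)
  calc (C (f.coeff k) * a ^ k * b ^ (n - k)).natDegree
      ≤ (a ^ k).natDegree + (b ^ (n - k)).natDegree :=
        natDegree_mul_le.trans (Nat.add_le_add_right (natDegree_C_mul_le _ _) _)
    _ ≤ k * 1 + (n - k) * 1 :=
        Nat.add_le_add (natDegree_pow_le_of_le k ha) (natDegree_pow_le_of_le _ hb)
    _ = n := by omega

theorem eval_homogComp {K : Type*} [Field K] {n : ℕ} {f a b : K[X]} (hf : f.natDegree ≤ n) {z : K}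
    (hb : b.eval z ≠ 0) :
    (homogComp n f a b).eval z = b.eval z ^ n * f.eval (a.eval z / b.eval z) := by
  rw [homogComp, eval_finsetSum, eval_eq_sum_range' (Nat.lt_succ_of_le hf), Finset.mul_sum]
  refine Finset.sum_congr rfl fun k hk => ?_
  have hk : k ≤ n := Nat.lt_succ_iff.mp (Finset.mem_range.mp hk)
  rw [eval_mul, eval_mul, eval_pow, eval_pow, eval_C, div_pow, pow_sub₀ _ hb hk]
  field_simp

end homogComp

end Polynomial

section Laurent

variable {K : Type*} [Field K]

noncomputable def laurentEval (D : ℕ) (q : ℤ → K) (z : K) : K :=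
  ∑ i ∈ Finset.Icc (-(D : ℤ)) D, q i * z ^ i

noncomputable def laurentNumerator (D : ℕ) (q : ℤ → K) : K[X] :=
  ∑ i ∈ Finset.Icc (-(D : ℤ)) D, C (q i) * X ^ (i + D).toNat

theorem eval_laurentNumerator (D : ℕ) (q : ℤ → K) {z : K} (hz : z ≠ 0) :
    (laurentNumerator D q).eval z = z ^ D * laurentEval D q z := by
  rw [laurentNumerator, laurentEval, eval_finsetSum, Finset.mul_sum]
  refine Finset.sum_congr rfl fun i hi => ?_
  have hi : 0 ≤ i + D := by have := (Finset.mem_Icc.mp hi).1; omega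
  rw [eval_mul, eval_C, eval_pow, eval_X, ← zpow_natCast, Int.toNat_of_nonneg hi, zpow_add₀ hz,
    zpow_natCast]
  ring

theorem natDegree_laurentNumerator_le (D : ℕ) (q : ℤ → K) :
    (laurentNumerator D q).natDegree ≤ 2 * D := by
  refine natDegree_sum_le_of_forall_le _ _ fun i hi => (natDegree_C_mul_X_pow_le _ _).trans ?_
  have := Finset.mem_Icc.mp hi
  omega

end Laurent

noncomputable def cayley (t : ℝ) : ℂ := (1 + I * t) / (1 - I * t)

theorem one_add_I_mul_ne_zero (t : ℝ) : 1 + I * t ≠ 0 := by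
  intro h
  simpa using congrArg re h

theorem one_sub_I_mul_ne_zero (t : ℝ) : 1 - I * t ≠ 0 := by
  intro h
  simpa using congrArg re h

theorem conj_one_add_I_mul (t : ℝ) : conj (1 + I * t) = 1 - I * t := by
  simp [sub_eq_add_neg]

theorem norm_cayley (t : ℝ) : ‖cayley t‖ = 1 := by
  rw [cayley, norm_div, ← conj_one_add_I_mul, norm_conj, div_self]
  rw [norm_ne_zero_iff, ← map_ne_zero (starRingEnd ℂ), conj_one_add_I_mul]
  exact one_sub_I_mul_ne_zero t

theorem one_add_cayley (t : ℝ) : 1 + cayley t = 2 * (1 - I * t)⁻¹ := by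
  have := one_sub_I_mul_ne_zero t
  rw [cayley]; field_simp; ring

theorem one_sub_cayley (t : ℝ) : 1 - cayley t = -2 * I * t * (1 - I * t)⁻¹ := by
  have := one_sub_I_mul_ne_zero t
  rw [cayley]; field_simp; ring

theorem cayley_injective : Function.Injective cayley := by
  refine Function.LeftInverse.injective (g := fun z => (I * (1 - z) / (1 + z)).re) fun t => ?_
  have := one_sub_I_mul_ne_zero t
  simp only [one_add_cayley, one_sub_cayley]
  field_simp
  simp [mul_comm]

theorem exists_natDegree_le_laurentEval_cayley_eq_mul_conj {D : ℕ} {q : ℤ → ℂ}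
    (hq : ∀ t : ℝ, 0 ≤ laurentEval D q (cayley t)) :
    ∃ P : ℂ[X], P.natDegree ≤ D ∧
      ∀ t : ℝ, laurentEval D q (cayley t) = P.eval (cayley t) * conj (P.eval (cayley t)) := by
  set R := homogComp (2 * D) (laurentNumerator D q) (1 + C I * X) (1 - C I * X)
  have hR : ∀ t : ℝ,
      R.eval (t : ℂ) = ((1 + I * t) * (1 - I * t)) ^ D * laurentEval D q (cayley t) := by
    intro t
    have hv := one_sub_I_mul_ne_zero t
    have hz : cayley t ≠ 0 := div_ne_zero (one_add_I_mul_ne_zero t) hv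
    have hzv : cayley t * (1 - I * t) = 1 + I * t := div_mul_cancel₀ _ hv
    rw [eval_homogComp (natDegree_laurentNumerator_le D q) (by simpa using hv)]
    simp only [eval_add, eval_sub, eval_one, eval_mul, eval_C, eval_X]
    rw [← cayley, eval_laurentNumerator D q hz, ← hzv]
    generalize 1 - I * t = v
    ring
  obtain ⟨S, hS⟩ := exists_eq_mul_map_conj_of_eval_ofReal_nonneg fun t => by
    rw [hR]
    refine mul_nonneg (pow_nonneg ?_ _) (hq t)
    rw [← conj_one_add_I_mul, mul_conj']
    exact pow_nonneg (zero_le_real.mpr (norm_nonneg _)) 2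
  have hSdeg : S.natDegree ≤ D := by
    have hRdeg : R.natDegree ≤ 2 * D :=
      natDegree_homogComp_le (by compute_degree!) (by compute_degree!)
    rw [hS, natDegree_mul_map_conj] at hRdeg
    omega
  -- `a / b` is the inverse Cayley transform `z ↦ i (1 - z) / (1 + z)`, scaled so that
  -- `b (cayley t) = (1 - i t)⁻¹`.
  refine ⟨homogComp D S (C (I / 2) * (1 - X)) (C (2⁻¹ : ℂ) * (1 + X)),
    natDegree_homogComp_le (by compute_degree!) (by compute_degree!), fun t => ?_⟩
  have hv := one_sub_I_mul_ne_zero t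
  have hP : (homogComp D S (C (I / 2) * (1 - X)) (C (2⁻¹ : ℂ) * (1 + X))).eval (cayley t) =
      (1 - I * t)⁻¹ ^ D * S.eval (t : ℂ) := by
    have hb : (C (2⁻¹ : ℂ) * (1 + X)).eval (cayley t) = (1 - I * t)⁻¹ := by
      rw [eval_mul, eval_C, eval_add, eval_one, eval_X, one_add_cayley]
      ring
    rw [eval_homogComp hSdeg (by rw [hb]; exact inv_ne_zero hv), hb]
    congr 2
    rw [eval_mul, eval_C, eval_sub, eval_one, eval_X, one_sub_cayley]
    field_simp
    rw [I_sq]; ring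
  have h := hR t
  rw [hS, eval_mul, eval_map_conj, conj_ofReal] at h
  have hconj : conj (1 - I * t) = 1 + I * t := by rw [← conj_one_add_I_mul, conj_conj]
  have hu := one_add_I_mul_ne_zero t
  rw [hP, map_mul, map_pow, map_inv₀, hconj]
  calc laurentEval D q (cayley t)
      = (((1 + I * t) * (1 - I * t)) ^ D)⁻¹ * (S.eval (t : ℂ) * conj (S.eval (t : ℂ))) := by
        rw [h, inv_mul_cancel_left₀ (pow_ne_zero _ (mul_ne_zero hu hv))]
    _ = _ := by rw [mul_pow, mul_inv, inv_pow, inv_pow]; ring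

theorem inv_conj_eq_self_of_norm_eq_one {z : ℂ} (hz : ‖z‖ = 1) : (conj z)⁻¹ = z := by
  rw [← map_inv₀, inv_eq_conj hz, conj_conj]

theorem eval_reflect_map_conj {D : ℕ} {P : ℂ[X]} (hP : P.natDegree ≤ D) {z : ℂ} (hz : z ≠ 0) :
    (reflect D (P.map (starRingEnd ℂ))).eval z = z ^ D * conj (P.eval (conj z)⁻¹) := by
  let := invertibleOfNonzero (inv_ne_zero hz)
  have h := eval₂_reflect_mul_pow (RingHom.id ℂ) z⁻¹ D (P.map (starRingEnd ℂ))
    (by rwa [natDegree_map])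
  rw [invOf_eq_inv, inv_inv, ← eval, ← eval, eval_map_conj, map_inv₀] at h
  rw [← h, inv_pow, mul_comm, inv_mul_cancel_right₀ (pow_ne_zero D hz)]

theorem laurentEval_eq_mul_conj_of_infinite_circle {D : ℕ} {q : ℤ → ℂ} {P : ℂ[X]} (hP : P.natDegree ≤ D)
    {s : Set ℂ} (hs : s.Infinite) (hs₁ : ∀ z ∈ s, ‖z‖ = 1)
    (h : ∀ z ∈ s, laurentEval D q z = P.eval z * conj (P.eval z)) {z : ℂ} (hz : z ≠ 0) :
    laurentEval D q z = P.eval z * conj (P.eval (conj z)⁻¹) := by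
  have key : laurentNumerator D q = P * reflect D (P.map (starRingEnd ℂ)) := by
    refine eq_of_infinite_eval_eq _ _ (hs.mono fun w hw => ?_)
    have hw₀ : w ≠ 0 := norm_ne_zero_iff.mp (hs₁ w hw ▸ one_ne_zero)
    rw [Set.mem_ofPred_eq, eval_mul, eval_laurentNumerator D q hw₀, eval_reflect_map_conj hP hw₀,
      inv_conj_eq_self_of_norm_eq_one (hs₁ w hw), h w hw]
    ring
  have hz' := congrArg (eval z) key
  rw [eval_mul, eval_laurentNumerator D q hz, eval_reflect_map_conj hP hz] at hz'
  exact mul_left_cancel₀ (pow_ne_zero D hz) (hz'.trans (by ring))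

/-- **Fejér–Riesz theorem.** A Laurent polynomial `Q(z) = ∑_{i=-D}^{D} q_i z^i` is real and
nonnegative on the unit circle if and only if there is a polynomial
`P(z) = ∑_{i=0}^{D} p_i z^i` of degree at most `D` with `Q(z) = P(z) ⬝ conj (P (1/conj z))`
for all nonzero `z`. -/
theorem fejer_riesz (D : ℕ) (q : ℤ → ℂ) :
    (∀ z : ℂ, ‖z‖ = 1 →
      ∃ r : ℝ, 0 ≤ r ∧ (∑ i ∈ Finset.Icc (-(D : ℤ)) (D : ℤ), q i * z ^ i) = (r : ℂ)) ↔
    (∃ p : ℕ → ℂ, ∀ z : ℂ, z ≠ 0 →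
      (∑ i ∈ Finset.Icc (-(D : ℤ)) (D : ℤ), q i * z ^ i) =
        (∑ i ∈ Finset.range (D + 1), p i * z ^ i) *
          (starRingEnd ℂ) (∑ i ∈ Finset.range (D + 1), p i * ((starRingEnd ℂ) z)⁻¹ ^ i)) := by
  constructor
  · intro H
    obtain ⟨P, hPdeg, hP⟩ := exists_natDegree_le_laurentEval_cayley_eq_mul_conj (D := D) (q := q)
      fun t => by
        obtain ⟨r, hr, h⟩ := H _ (norm_cayley t)
        rw [laurentEval, h]
        exact zero_le_real.mpr hr
    refine ⟨P.coeff, fun z hz => ?_⟩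
    simp only [← eval_eq_sum_range' (Nat.lt_succ_of_le hPdeg)]
    exact laurentEval_eq_mul_conj_of_infinite_circle hPdeg (Set.infinite_range_of_injective cayley_injective)
      (by rintro _ ⟨t, rfl⟩; exact norm_cayley t) (by rintro _ ⟨t, rfl⟩; exact hP t) hz
  · rintro ⟨p, hp⟩ z hz
    rw [hp z (norm_ne_zero_iff.mp (hz ▸ one_ne_zero)), inv_conj_eq_self_of_norm_eq_one hz,
      mul_conj']
    exact ⟨_, sq_nonneg _, by push_cast; rfl⟩
end

section
/- Let Q(z) = Σ_{i=-(N-1)}^{N-1} q_i z^i be a Laurent polynomial of degree N−1 with complex coefficients. Then Q(z) is real and nonnegative for every complex z with |z| = 1 if and only if there exists an N×N Hermitian positive semidefinite complex matrix M such that q_i = Tr_i M for every i with −(N−1) ≤ i ≤ N−1, where Tr_i M denotes the trace of M along its i-th superdiagonal (for i ≥ 0, Tr_i M = Σ_{ℓ=1}^{N−i} M_{ℓ, ℓ+i}; for i < 0, Tr_i M = Σ_{ℓ=1}^{N+i} M_{ℓ−i, ℓ}). -/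
open scoped ComplexOrder

/-- The trace of an `N × N` matrix along its `i`-th superdiagonal (for `i < 0`, along its
`(-i)`-th subdiagonal): `Tr_i M = ∑_{ℓ=1}^{N-i} M_{ℓ, ℓ+i}` for `i ≥ 0`, and
`Tr_i M = ∑_{ℓ=1}^{N+i} M_{ℓ-i, ℓ}` for `i < 0`. -/
noncomputable def diagTrace {N : ℕ} (M : Matrix (Fin N) (Fin N) ℂ) (i : ℤ) : ℂ :=
  ∑ a : Fin N, ∑ b : Fin N, if (b : ℤ) - (a : ℤ) = i then M a b else 0

/-!
On the unit circle `conj z = z⁻¹`, so a Laurent polynomial `Q` of degree `n` is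
`conj z ^ n * R.eval z` for the polynomial `R = zⁿ Q` of degree `≤ 2n`.

If `q_i = Tr_i M`, then `Q(z) = v* M v` on the circle with `v = (1, z, …, zⁿ)`, so `Q ≥ 0`
when `M ⪰ 0`. Conversely, if `Q ≥ 0` then `Q + ε > 0` on the circle, and the Fejér–Riesz
theorem writes `Q + ε = |P|²` with `deg P ≤ n`; comparing coefficients, `q + ε δ₀` are the
diagonal traces of the rank-one Gram matrix `p̄ pᵀ` of the coefficient vector `p` of `P`.
Since `‖p‖² = q₀ + ε` stays bounded, a limit point as `ε → 0` gives the matrix `M`.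

Fejér–Riesz is proved by induction on `n`: positivity on the circle makes `R` self-inversive,
so its roots come in pairs `w`, `1 / conj w` with `|w| ≠ 1`, and on the circle
`conj z * (z - w) * (z - 1 / conj w)` is `|z - w|²` times a constant, so dividing by these two
factors lowers `n` by one and `z - w` becomes a factor of `P`. (If the top coefficient of `R`
vanishes, so does the constant one, and `R` is divided by `z` instead.)
-/

open Polynomial ComplexConjugate Matrix Filter Topology

lemma infinite_unit_circle : (Metric.sphere (0 : ℂ) 1).Infinite :=
  (isPreconnected_sphere (by simp [Complex.rank_real_complex]) 0 1).infinite_of_nontrivial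
    ⟨1, by simp, -1, by simp, by norm_num⟩

lemma Polynomial.eq_of_eval_eq_on_unit_circle {P Q : ℂ[X]}
    (h : ∀ z : ℂ, ‖z‖ = 1 → P.eval z = Q.eval z) : P = Q := by
  rw [← sub_eq_zero]
  refine eq_zero_of_infinite_isRoot _ (infinite_unit_circle.mono fun z hz => ?_)
  simp [h z (mem_sphere_zero_iff_norm.mp hz)]

lemma ne_zero_of_norm_eq_one {E : Type*} [NormedAddCommGroup E] {z : E} (hz : ‖z‖ = 1) :
    z ≠ 0 := by
  rintro rfl
  simp at hz

lemma conj_mul_self_of_norm_eq_one {z : ℂ} (hz : ‖z‖ = 1) : conj z * z = 1 := by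
  simp [Complex.conj_mul', hz]

lemma zpow_natCast_sub_natCast_of_norm_eq_one {z : ℂ} (hz : ‖z‖ = 1) (a b : ℕ) :
    z ^ ((b : ℤ) - a) = conj z ^ a * z ^ b := by
  rw [zpow_sub₀ (ne_zero_of_norm_eq_one hz), zpow_natCast, zpow_natCast,
    div_eq_mul_inv, ← inv_pow, Complex.inv_eq_conj hz, mul_comm]

lemma Polynomial.eval_reflect_of_ne_zero {K : Type*} [Field K] {R : K[X]} {m : ℕ}
    (hR : R.natDegree ≤ m) {u : K} (hu : u ≠ 0) :
    (reflect m R).eval u = u ^ m * R.eval u⁻¹ := by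
  have : Invertible u⁻¹ := invertibleOfNonzero (inv_ne_zero hu)
  have h := eval₂_reflect_mul_pow (RingHom.id K) u⁻¹ m R hR
  rw [invOf_eq_inv, inv_inv] at h
  rw [eval, eval, ← h, mul_left_comm, ← mul_pow, mul_inv_cancel₀ hu, one_pow, mul_one]

-- Coefficientwise: `R.coeff (m - k) = conj (R.coeff k)` for `k ≤ m`.
def IsSelfInversive (m : ℕ) (R : ℂ[X]) : Prop :=
  (reflect m R).map (starRingEnd ℂ) = R

lemma isSelfInversive_of_real_on_circle {m : ℕ} {R : ℂ[X]} (hR : R.natDegree ≤ 2 * m)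
    (hreal : ∀ z : ℂ, ‖z‖ = 1 → conj (conj z ^ m * R.eval z) = conj z ^ m * R.eval z) :
    IsSelfInversive (2 * m) R := by
  refine eq_of_eval_eq_on_unit_circle fun z hz => ?_
  have hz0 : z ≠ 0 := ne_zero_of_norm_eq_one hz
  have hzm : conj z ^ m * z ^ m = 1 := by rw [← mul_pow, conj_mul_self_of_norm_eq_one hz, one_pow]
  have hrealz := hreal z hz
  simp only [map_mul, map_pow, Complex.conj_conj] at hrealz
  conv_lhs => rw [← Complex.conj_conj z]
  rw [eval_map_apply, ← Complex.inv_eq_conj hz, eval_reflect_of_ne_zero hR (inv_ne_zero hz0),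
    inv_inv, map_mul, map_pow, map_inv₀, ← Complex.inv_eq_conj hz, inv_inv]
  linear_combination z ^ m * hrealz + R.eval z * hzm

lemma IsSelfInversive.coeff_zero {m : ℕ} {R : ℂ[X]} (h : IsSelfInversive m R) :
    R.coeff 0 = conj (R.coeff m) := by
  conv_lhs => rw [← h]
  rw [coeff_map, coeff_reflect, revAt_le (Nat.zero_le _), Nat.sub_zero]

lemma IsSelfInversive.eval_inv_conj_eq_zero {m : ℕ} {R : ℂ[X]} (h : IsSelfInversive m R)
    (hR : R.natDegree ≤ m) {w : ℂ} (hw0 : w ≠ 0) (hw : R.eval w = 0) :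
    R.eval (conj w)⁻¹ = 0 := by
  rw [← h, ← map_inv₀, eval_map_apply, eval_reflect_of_ne_zero hR (inv_ne_zero hw0), inv_inv,
    hw, mul_zero, map_zero]

lemma exists_X_factor_of_coeff_eq_zero {n : ℕ} {R : ℂ[X]} (hR : R.natDegree ≤ 2 * (n + 1))
    (h0 : R.coeff 0 = 0) (htop : R.coeff (2 * (n + 1)) = 0) :
    ∃ R' : ℂ[X], R'.natDegree ≤ 2 * n ∧
      ∀ z : ℂ, ‖z‖ = 1 → conj z ^ (n + 1) * R.eval z = conj z ^ n * R'.eval z := by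
  obtain ⟨R', rfl⟩ := X_dvd_iff.mpr h0
  refine ⟨R', natDegree_le_iff_coeff_eq_zero.mpr fun N hN => ?_, fun z hz => ?_⟩
  · rw [← coeff_X_mul]
    rcases (show N + 1 = 2 * (n + 1) ∨ 2 * (n + 1) < N + 1 by omega) with h | h
    · rwa [h]
    · exact coeff_eq_zero_of_natDegree_lt (hR.trans_lt h)
  · rw [eval_mul, eval_X, pow_succ, mul_assoc, ← mul_assoc (conj z),
      conj_mul_self_of_norm_eq_one hz, one_mul]

lemma exists_root_pair_factor {n : ℕ} {R : ℂ[X]} (hR : R.natDegree ≤ 2 * (n + 1))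
    (hsym : IsSelfInversive (2 * (n + 1)) R) {w : ℂ} (hw0 : w ≠ 0) (hw1 : ‖w‖ ≠ 1)
    (hw : R.IsRoot w) :
    ∃ R' : ℂ[X], R'.natDegree ≤ 2 * n ∧ ∀ z : ℂ, ‖z‖ = 1 →
      conj z ^ (n + 1) * R.eval z = conj (z - w) * (z - w) * (conj z ^ n * R'.eval z) := by
  set v := (conj w)⁻¹
  have hv : v * conj w = 1 := inv_mul_cancel₀ (by simpa using hw0)
  have hvw : v ≠ w := by
    intro h
    have hw2 : conj w * w = 1 := by rw [← hv, h, mul_comm]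
    rw [Complex.conj_mul'] at hw2
    exact hw1 ((pow_eq_one_iff_of_nonneg (norm_nonneg w) two_ne_zero).mp (by exact_mod_cast hw2))
  have hR₁ : (X - C w) * (R /ₘ (X - C w)) = R := mul_divByMonic_eq_iff_isRoot.mpr hw
  have hR₂ : (X - C v) * (R /ₘ (X - C w) /ₘ (X - C v)) = R /ₘ (X - C w) := by
    refine mul_divByMonic_eq_iff_isRoot.mpr ?_
    have hRv := hsym.eval_inv_conj_eq_zero hR hw0 hw
    rw [← hR₁, eval_mul, eval_sub, eval_X, eval_C] at hRv
    exact (mul_eq_zero.mp hRv).resolve_left (sub_ne_zero.mpr hvw)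
  refine ⟨C (-v) * (R /ₘ (X - C w) /ₘ (X - C v)), ?_, fun z hz => ?_⟩
  · refine (natDegree_C_mul_le _ _).trans ?_
    rw [natDegree_divByMonic _ (monic_X_sub_C v), natDegree_divByMonic _ (monic_X_sub_C w),
      natDegree_X_sub_C, natDegree_X_sub_C]
    omega
  · -- on the circle `(z - v) * conj z = -v * conj (z - w)`, as `conj z * z = v * conj w = 1`
    conv_lhs => rw [← hR₁, ← hR₂]
    simp only [eval_mul, eval_sub, eval_X, eval_C, map_sub]
    linear_combination (conj z ^ n * (z - w) * (R /ₘ (X - C w) /ₘ (X - C v)).eval z) *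
      (conj_mul_self_of_norm_eq_one hz - hv)

lemma exists_linear_factor_of_pos_on_circle {n : ℕ} {R : ℂ[X]}
    (hR : R.natDegree ≤ 2 * (n + 1))
    (hpos : ∀ z : ℂ, ‖z‖ = 1 → 0 < conj z ^ (n + 1) * R.eval z) :
    ∃ L R' : ℂ[X], L.natDegree ≤ 1 ∧ R'.natDegree ≤ 2 * n ∧ ∀ z : ℂ, ‖z‖ = 1 →
      conj z ^ (n + 1) * R.eval z = conj (L.eval z) * L.eval z * (conj z ^ n * R'.eval z) := by
  have hsym : IsSelfInversive (2 * (n + 1)) R := isSelfInversive_of_real_on_circle hR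
    fun z hz => Complex.conj_eq_iff_im.mpr (Complex.pos_iff.mp (hpos z hz)).2.symm
  by_cases htop : R.coeff (2 * (n + 1)) = 0
  · obtain ⟨R', hR', hfac⟩ := exists_X_factor_of_coeff_eq_zero hR
      (by rw [hsym.coeff_zero, htop, map_zero]) htop
    exact ⟨1, R', by simp, hR', fun z hz => by simp [hfac z hz]⟩
  · have hdeg : R.natDegree = 2 * (n + 1) := le_antisymm hR (le_natDegree_of_ne_zero htop)
    obtain ⟨w, hw⟩ :=
      Complex.exists_root ((natDegree_pos_iff_degree_pos (p := R)).mp (by omega))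
    have hw0 : w ≠ 0 := by
      rintro rfl
      rw [IsRoot, ← coeff_zero_eq_eval_zero, hsym.coeff_zero, map_eq_zero] at hw
      exact htop hw
    have hw1 : ‖w‖ ≠ 1 := fun h => by
      simpa only [hw.eq_zero, mul_zero, lt_self_iff_false] using hpos w h
    obtain ⟨R', hR', hfac⟩ := exists_root_pair_factor hR hsym hw0 hw1 hw
    exact ⟨X - C w, R', by rw [natDegree_X_sub_C], hR', by simpa using hfac⟩

theorem fejer_riesz_s1 (n : ℕ) {R : ℂ[X]} (hR : R.natDegree ≤ 2 * n)
    (hpos : ∀ z : ℂ, ‖z‖ = 1 → 0 < conj z ^ n * R.eval z) :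
    ∃ P : ℂ[X], P.natDegree ≤ n ∧
      ∀ z : ℂ, ‖z‖ = 1 → conj z ^ n * R.eval z = conj (P.eval z) * P.eval z := by
  induction n generalizing R with
  | zero =>
    obtain ⟨c, rfl⟩ : ∃ c, R = C c := ⟨_, eq_C_of_natDegree_le_zero hR⟩
    obtain ⟨r, hr, rfl⟩ := RCLike.pos_iff_exists_ofReal.mp (by simpa using hpos 1 (by simp))
    refine ⟨C (Real.sqrt r : ℂ), by simp, fun z _ => ?_⟩
    simp only [pow_zero, one_mul, eval_C, Complex.conj_ofReal, ← Complex.ofReal_mul,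
      Real.mul_self_sqrt hr.le]
    rfl
  | succ n ih =>
    obtain ⟨L, R', hL, hR', hfac⟩ := exists_linear_factor_of_pos_on_circle hR hpos
    have hpos' : ∀ z : ℂ, ‖z‖ = 1 → 0 < conj z ^ n * R'.eval z := fun z hz =>
      pos_of_mul_pos_right (hfac z hz ▸ hpos z hz) (by rw [Complex.conj_mul']; positivity)
    obtain ⟨P, hP, hPfac⟩ := ih hR' hpos'
    refine ⟨L * P, natDegree_mul_le.trans (by omega), fun z hz => ?_⟩
    rw [hfac z hz, hPfac z hz, eval_mul, map_mul]
    ring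

noncomputable def laurentSum (n : ℕ) (c : ℤ → ℂ) (z : ℂ) : ℂ :=
  ∑ i ∈ Finset.Icc (-(n : ℤ)) n, c i * z ^ i

noncomputable def laurentToPoly (n : ℕ) (c : ℤ → ℂ) : ℂ[X] :=
  ∑ i ∈ Finset.Icc (-(n : ℤ)) n, C (c i) * X ^ (i + n).toNat

lemma natDegree_laurentToPoly_le (n : ℕ) (c : ℤ → ℂ) :
    (laurentToPoly n c).natDegree ≤ 2 * n :=
  natDegree_sum_le_of_forall_le _ _ fun i hi =>
    (natDegree_C_mul_X_pow_le _ _).trans (by rw [Finset.mem_Icc] at hi; omega)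

lemma coeff_laurentToPoly {n : ℕ} (c : ℤ → ℂ) {i : ℤ}
    (hi : i ∈ Finset.Icc (-(n : ℤ)) n) :
    (laurentToPoly n c).coeff (i + n).toNat = c i := by
  rw [laurentToPoly, finsetSum_coeff, Finset.sum_eq_single_of_mem i hi]
  · simp
  · intro j hj hji
    rw [Finset.mem_Icc] at hi hj
    rw [coeff_C_mul_X_pow, if_neg (by omega)]

lemma conj_pow_mul_eval_laurentToPoly {n : ℕ} (c : ℤ → ℂ) {z : ℂ} (hz : ‖z‖ = 1) :
    conj z ^ n * (laurentToPoly n c).eval z = laurentSum n c z := by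
  rw [laurentToPoly, laurentSum, eval_finsetSum, Finset.mul_sum]
  refine Finset.sum_congr rfl fun i hi => ?_
  rw [Finset.mem_Icc] at hi
  have hzi : z ^ (i + n).toNat = z ^ i * z ^ n := by
    rw [← zpow_natCast, Int.toNat_of_nonneg (by omega),
      zpow_add₀ (ne_zero_of_norm_eq_one hz), zpow_natCast]
  rw [eval_mul, eval_C, eval_pow, eval_X, hzi]
  have hzn : conj z ^ n * z ^ n = 1 := by
    rw [← mul_pow, conj_mul_self_of_norm_eq_one hz, one_pow]
  linear_combination c i * z ^ i * hzn

lemma eq_of_laurent_eq_on_circle {n : ℕ} {c d : ℤ → ℂ}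
    (h : ∀ z : ℂ, ‖z‖ = 1 →
      laurentSum n c z = laurentSum n d z) :
    ∀ i ∈ Finset.Icc (-(n : ℤ)) n, c i = d i := by
  have hcd : laurentToPoly n c = laurentToPoly n d := eq_of_eval_eq_on_unit_circle fun z hz => by
    refine mul_left_cancel₀ (pow_ne_zero n ((map_ne_zero (starRingEnd ℂ)).mpr
      (ne_zero_of_norm_eq_one hz))) ?_
    rw [conj_pow_mul_eval_laurentToPoly c hz, conj_pow_mul_eval_laurentToPoly d hz, h z hz]
  intro i hi
  rw [← coeff_laurentToPoly c hi, hcd, coeff_laurentToPoly d hi]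

lemma laurentSum_diagTrace {n : ℕ} (M : Matrix (Fin (n + 1)) (Fin (n + 1)) ℂ) {z : ℂ}
    (hz : ‖z‖ = 1) :
    laurentSum n (diagTrace M) z =
      star (fun a : Fin (n + 1) => z ^ (a : ℕ)) ⬝ᵥ M *ᵥ fun a => z ^ (a : ℕ) := by
  simp only [laurentSum, diagTrace, Finset.sum_mul, ite_mul, zero_mul, dotProduct, mulVec,
    Finset.mul_sum]
  rw [Finset.sum_comm]
  refine Finset.sum_congr rfl fun a _ => ?_
  rw [Finset.sum_comm]
  refine Finset.sum_congr rfl fun b _ => ?_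
  rw [Finset.sum_ite_eq, if_pos (by rw [Finset.mem_Icc]; omega),
    zpow_natCast_sub_natCast_of_norm_eq_one hz]
  simp only [Pi.star_apply, RCLike.star_def, map_pow]
  ring

lemma exists_gram_of_pos {n : ℕ} {c : ℤ → ℂ}
    (hpos : ∀ z : ℂ, ‖z‖ = 1 → 0 < laurentSum n c z) :
    ∃ p : Fin (n + 1) → ℂ,
      ∀ i ∈ Finset.Icc (-(n : ℤ)) n, c i = diagTrace (vecMulVec (star p) p) i := by
  obtain ⟨P, hPdeg, hP⟩ := fejer_riesz_s1 n (natDegree_laurentToPoly_le n c)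
    fun z hz => (conj_pow_mul_eval_laurentToPoly c hz).symm ▸ hpos z hz
  refine ⟨fun a => P.coeff a, eq_of_laurent_eq_on_circle fun z hz => ?_⟩
  have hPz : P.eval z = (fun a : Fin (n + 1) => P.coeff a) ⬝ᵥ fun a => z ^ (a : ℕ) := by
    rw [eval_eq_sum_range' (Nat.lt_succ_of_le hPdeg), dotProduct,
      Fin.sum_univ_eq_sum_range (fun j => P.coeff j * z ^ j)]
  rw [← conj_pow_mul_eval_laurentToPoly c hz, hP z hz, laurentSum_diagTrace _ hz,
    dotProduct_mulVec, vecMul_vecMulVec, smul_dotProduct, star_dotProduct_star, hPz, smul_eq_mul]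
  rfl

lemma exists_gram_of_nonneg_add {n : ℕ} {q : ℤ → ℂ}
    (hq : ∀ z : ℂ, ‖z‖ = 1 → 0 ≤ laurentSum n q z) {ε : ℝ} (hε : 0 < ε) :
    ∃ p : Fin (n + 1) → ℂ, ∀ i ∈ Finset.Icc (-(n : ℤ)) n,
      q i + (if i = 0 then (ε : ℂ) else 0) = diagTrace (vecMulVec (star p) p) i := by
  refine exists_gram_of_pos fun z hz => ?_
  have h0 : (0 : ℤ) ∈ Finset.Icc (-(n : ℤ)) n := by simp
  simp only [laurentSum, add_mul, ite_mul, zero_mul, Finset.sum_add_distrib, Finset.sum_ite_eq',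
    if_pos h0, zpow_zero, mul_one]
  exact add_pos_of_nonneg_of_pos (hq z hz) (by exact_mod_cast hε)

lemma diagTrace_zero {N : ℕ} (M : Matrix (Fin N) (Fin N) ℂ) : diagTrace M 0 = M.trace := by
  refine Finset.sum_congr rfl fun a _ => ?_
  rw [Finset.sum_eq_single_of_mem a (Finset.mem_univ a), if_pos (sub_self _)]
  · rfl
  · intro b _ hba
    rw [if_neg (by omega)]

lemma norm_sq_le_re_diagTrace_zero {N : ℕ} (p : Fin N → ℂ) (a : Fin N) :
    ‖p a‖ ^ 2 ≤ (diagTrace (vecMulVec (star p) p) 0).re := by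
  have htr : (diagTrace (vecMulVec (star p) p) 0).re = ∑ b, ‖p b‖ ^ 2 := by
    simp only [diagTrace_zero, trace_vecMulVec, dotProduct, Pi.star_apply, RCLike.star_def,
      Complex.conj_mul', Complex.re_sum]
    norm_cast
  rw [htr]
  exact Finset.single_le_sum (f := fun b => ‖p b‖ ^ 2) (fun b _ => by positivity)
    (Finset.mem_univ a)

lemma continuous_diagTrace_vecMulVec {N : ℕ} (i : ℤ) :
    Continuous fun p : Fin N → ℂ => diagTrace (vecMulVec (star p) p) i :=
  continuous_finsetSum _ fun a _ => continuous_finsetSum _ fun b _ => by split_ifs <;> fun_prop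

lemma exists_posSemidef_of_nonneg {n : ℕ} {q : ℤ → ℂ}
    (hq : ∀ z : ℂ, ‖z‖ = 1 → 0 ≤ laurentSum n q z) :
    ∃ M : Matrix (Fin (n + 1)) (Fin (n + 1)) ℂ,
      M.PosSemidef ∧ ∀ i ∈ Finset.Icc (-(n : ℤ)) n, q i = diagTrace M i := by
  choose p hp using fun k : ℕ => exists_gram_of_nonneg_add hq (Nat.one_div_pos_of_nat (n := k))
  let f : (Fin (n + 1) → ℂ) → Finset.Icc (-(n : ℤ)) n → ℂ :=
    fun p i => diagTrace (vecMulVec (star p) p) i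
  have hf : Continuous f := continuous_pi fun i => continuous_diagTrace_vecMulVec i
  have hbound : ∀ k, p k ∈ Metric.closedBall 0 √((q 0).re + 1) := by
    intro k
    rw [mem_closedBall_zero_iff, pi_norm_le_iff_of_nonneg (Real.sqrt_nonneg _)]
    intro a
    have h0 := hp k 0 (by simp)
    have hk : (1 : ℝ) / (k + 1) ≤ 1 :=
      div_le_one_of_le₀ (by linarith [k.cast_nonneg (α := ℝ)]) (by positivity)
    refine Real.le_sqrt_of_sq_le ((norm_sq_le_re_diagTrace_zero (p k) a).trans ?_)
    rw [← h0, if_pos rfl, Complex.add_re, Complex.ofReal_re]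
    linarith
  have hlim : Tendsto (fun k => f (p k)) atTop (𝓝 fun i => q i) := by
    refine tendsto_pi_nhds.mpr fun i => ?_
    simp only [f, ← hp _ i i.2]
    by_cases hi : (i : ℤ) = 0
    · simpa [hi] using tendsto_const_nhds.add
        ((Complex.continuous_ofReal.tendsto 0).comp tendsto_one_div_add_atTop_nhds_zero_nat)
    · simp [hi]
  obtain ⟨p₀, -, hp₀⟩ := ((isCompact_closedBall _ _).image hf).isClosed.mem_of_tendsto hlim
    (Filter.Eventually.of_forall fun k => Set.mem_image_of_mem f (hbound k))
  exact ⟨vecMulVec (star p₀) p₀, posSemidef_vecMulVec_star_self p₀,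
    fun i hi => (congrFun hp₀ ⟨i, hi⟩ :).symm⟩

lemma nonneg_of_posSemidef {n : ℕ} {q : ℤ → ℂ} {M : Matrix (Fin (n + 1)) (Fin (n + 1)) ℂ}
    (hM : M.PosSemidef) (hq : ∀ i ∈ Finset.Icc (-(n : ℤ)) n, q i = diagTrace M i) {z : ℂ}
    (hz : ‖z‖ = 1) : 0 ≤ laurentSum n q z := by
  have hqM : laurentSum n q z = laurentSum n (diagTrace M) z :=
    Finset.sum_congr rfl fun i hi => by rw [hq i hi]
  rw [hqM, laurentSum_diagTrace M hz]
  exact hM.dotProduct_mulVec_nonneg _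

theorem laurent_nonneg_iff_psd_gram_general (N : ℕ) (q : ℤ → ℂ) :
    (∀ z : ℂ, ‖z‖ = 1 →
      ∃ r : ℝ, 0 ≤ r ∧
        (∑ i ∈ Finset.Icc (-((N : ℤ) - 1)) ((N : ℤ) - 1), q i * z ^ i) = (r : ℂ)) ↔
    (∃ M : Matrix (Fin N) (Fin N) ℂ, M.IsHermitian ∧ M.PosSemidef ∧
      ∀ i : ℤ, -((N : ℤ) - 1) ≤ i → i ≤ (N : ℤ) - 1 → q i = diagTrace M i) := by
  rcases N with _ | n
  · exact iff_of_true (fun _ _ => ⟨0, le_rfl, by simp⟩)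
      ⟨0, isHermitian_zero, PosSemidef.zero, fun i h₁ h₂ => by omega⟩
  have hn : ((n + 1 : ℕ) : ℤ) - 1 = n := by push_cast; ring
  simp only [hn]
  constructor
  · intro hq
    obtain ⟨M, hM, hMq⟩ := exists_posSemidef_of_nonneg (q := q) fun z hz => by
      obtain ⟨r, hr, hqr⟩ := hq z hz
      rw [laurentSum, hqr]
      exact_mod_cast hr
    exact ⟨M, hM.isHermitian, hM, fun i h₁ h₂ => hMq i (Finset.mem_Icc.mpr ⟨h₁, h₂⟩)⟩
  · rintro ⟨M, -, hM, hMq⟩ z hz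
    have h := nonneg_of_posSemidef hM (fun i hi => hMq i (Finset.mem_Icc.mp hi).1
      (Finset.mem_Icc.mp hi).2) hz
    exact ⟨_, (Complex.nonneg_iff.mp h).1, Complex.eq_re_of_ofReal_le h⟩

/-- A Laurent polynomial `Q(z) = ∑_{i=-(N-1)}^{N-1} q_i z^i` of degree `N-1` is real and
nonnegative on the unit circle iff there is an `N × N` Hermitian positive semidefinite matrix
`M` with `q_i = Tr_i M` for all `-(N-1) ≤ i ≤ N-1`. -/
theorem laurent_nonneg_iff_psd_gram (N : ℕ) (hN : 0 < N) (q : ℤ → ℂ) :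
    (∀ z : ℂ, ‖z‖ = 1 →
      ∃ r : ℝ, 0 ≤ r ∧
        (∑ i ∈ Finset.Icc (-((N : ℤ) - 1)) ((N : ℤ) - 1), q i * z ^ i) = (r : ℂ)) ↔
    (∃ M : Matrix (Fin N) (Fin N) ℂ, M.IsHermitian ∧ M.PosSemidef ∧
      ∀ i : ℤ, -((N : ℤ) - 1) ≤ i → i ≤ (N : ℤ) - 1 → q i = diagTrace M i) :=
  laurent_nonneg_iff_psd_gram_general N q
end

section
/- Fix a positive integer N. For j ∈ {0, 1, …, N−1} define f_j : {0, 1, …, N−1} → {−1, +1} by f_j(x) = −1 if x < j and f_j(x) = +1 if x ≥ j; define g_j : ℤ/2N → {−1, +1} by g_j(x) = f_j(x) for 0 ≤ x < N and g_j(x) = −f_j(x − N) for N ≤ x < 2N (using the representative of x in {0, …, 2N−1}), and extend to j ∈ {N, …, 2N−1} by g_j(x) = −g_{j−N}(x), so that g is defined for all j ∈ ℤ/2N. Then g is translationally equivariant: g_{j+ℓ}(x) = g_j(x − ℓ) for all j, x, ℓ ∈ ℤ/2N, where addition and subtraction of indices are taken modulo 2N. -/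
/-- The ordered-search query function `f_j : {0,…,N-1} → {±1}`:
`f_j(x) = -1` if `x < j` and `+1` if `x ≥ j`. -/
def osQuery (j x : ℕ) : ℤ := if x < j then -1 else 1

/-- The extension of `f_j` for `0 ≤ j < N` to `{0,…,2N-1}`:
`g_j(x) = f_j(x)` for `0 ≤ x < N` and `g_j(x) = -f_j(x - N)` for `N ≤ x < 2N`. -/
def osQueryExtAux (N j x : ℕ) : ℤ :=
  if x < N then osQuery j x else -(osQuery j (x - N))

/-- The fully extended ordered-search query function `g : ℤ/2N → ℤ/2N → {±1}`, defined on
representatives in `{0,…,2N-1}`: for `j < N` it is `osQueryExtAux`, and for `N ≤ j < 2N` it is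
`g_j = -g_{j-N}`. -/
def osQueryExt (N : ℕ) (j x : ZMod (2 * N)) : ℤ :=
  if j.val < N then osQueryExtAux N j.val x.val else -(osQueryExtAux N (j.val - N) x.val)

lemma osQueryExt_eq_closed (N : ℕ) (hN : 0 < N) (j x : ZMod (2 * N)) :
    osQueryExt N j x = if (x - j).val < N then 1 else -1 := by
  haveI : NeZero (2 * N) := ⟨by omega⟩
  have ha := ZMod.val_lt x
  have hb := ZMod.val_lt j
  set a := x.val with hav
  set b := j.val with hbv
  have hcast : x - j = ((a + 2 * N - b : ℕ) : ZMod (2 * N)) := by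
    have h1 : (b : ℕ) ≤ a + 2 * N := by omega
    rw [hav, hbv, Nat.cast_sub h1, Nat.cast_add, ZMod.natCast_self, ZMod.natCast_val,
      ZMod.natCast_val, ZMod.cast_id, ZMod.cast_id]
    ring
  have hval : (x - j).val = (a + 2 * N - b) % (2 * N) := by
    rw [hcast, ZMod.val_natCast]
  rcases le_or_gt b a with h | h
  · have hm : (a + 2 * N - b) % (2 * N) = a - b := by
      have : a + 2 * N - b = (a - b) + 2 * N := by omega
      rw [this, Nat.add_mod_right, Nat.mod_eq_of_lt (by omega)]
    rw [hval, hm]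
    simp only [osQueryExt, osQueryExtAux, osQuery]
    split_ifs <;> omega
  · have hm : (a + 2 * N - b) % (2 * N) = a + 2 * N - b := by
      rw [Nat.mod_eq_of_lt (by omega)]
    rw [hval, hm]
    simp only [osQueryExt, osQueryExtAux, osQuery]
    split_ifs <;> omega

/-- The extended ordered-search query function is translationally equivariant:
`g_{j+ℓ}(x) = g_j(x - ℓ)` for all `j, x, ℓ ∈ ℤ/2N`. -/
theorem osQueryExt_translation_equivariant (N : ℕ) (hN : 0 < N) :
    ∀ j x ℓ : ZMod (2 * N), osQueryExt N (j + ℓ) x = osQueryExt N j (x - ℓ) := by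
  intro j x ℓ
  rw [osQueryExt_eq_closed N hN, osQueryExt_eq_closed N hN]
  have : x - (j + ℓ) = (x - ℓ) - j := by ring
  rw [this]
end

section
/- The semidefinite program S(2,3) is feasible: there exist real symmetric positive semidefinite 3×3 matrices Q_0, Q_1, Q_2 such that Q_0 = E/3 (E the 3×3 all-ones matrix), Q_2 = I/3 (I the 3×3 identity), Tr Q_1 = 1, and the signed-trace constraints 𝒯_1 Q_1 = 𝒯_1 Q_0 and 𝒯_2 Q_2 = 𝒯_2 Q_1 hold, where (𝒯_t X)_i = Tr_i X + (−1)^t Tr_{i−3} X for i = 1, 2. -/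
/-- The trace of a real `N × N` matrix along its `i`-th superdiagonal (for `i < 0`, along its
`(-i)`-th subdiagonal). -/
noncomputable def diagTraceR {N : ℕ} (M : Matrix (Fin N) (Fin N) ℝ) (i : ℤ) : ℝ :=
  ∑ a : Fin N, ∑ b : Fin N, if (b : ℤ) - (a : ℤ) = i then M a b else 0

/-- The signed trace `(𝒯_t X)_i = Tr_i X + (-1)^t Tr_{i-N} X`. -/
noncomputable def signedTrace {N : ℕ} (t : ℕ) (X : Matrix (Fin N) (Fin N) ℝ) (i : ℤ) : ℝ :=
  diagTraceR X i + (-1) ^ t * diagTraceR X (i - (N : ℤ))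

/-!
`E/3` and `I/3` are positive semidefinite, so everything rests on the middle matrix
`Q₁ = [[1/3, 1/6, -1/6], [1/6, 1/3, 0], [-1/6, 0, 1/3]]`. On a `3 × 3` matrix the signed traces are
`(𝒯_t X)_1 = X₀₁ + X₁₂ + (-1)^t X₂₀` and `(𝒯_t X)_2 = X₀₂ + (-1)^t (X₁₀ + X₂₁)`; the off-diagonal
entries of `Q₁` are chosen so that these equal `1/3, -1/3` for `t = 1` (as for `E/3`) and `0, 0`
for `t = 2` (as for `I/3`), while `Q₁ = (1/6) BᵀB` is a Gram matrix and hence positive semidefinite.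
-/

open Matrix

theorem Matrix.PosSemidef.isSymm {n R : Type*} [Fintype n] [Ring R] [PartialOrder R] [StarRing R]
    [TrivialStar R] {A : Matrix n n R} (hA : A.PosSemidef) : A.IsSymm :=
  isHermitian_iff_isSymm.mp hA.isHermitian

theorem Matrix.posSemidef_allOnes {n R : Type*} [Fintype n] [Ring R] [PartialOrder R]
    [StarRing R] [StarOrderedRing R] :
    (of fun _ _ : n => (1 : R)).PosSemidef := by
  simpa [vecMulVec] using posSemidef_vecMulVec_self_star (fun _ : n => (1 : R))

theorem signedTrace_fin_three_one (t : ℕ) (X : Matrix (Fin 3) (Fin 3) ℝ) :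
    signedTrace t X 1 = X 0 1 + X 1 2 + (-1) ^ t * X 2 0 := by
  simp [signedTrace, diagTraceR, Fin.sum_univ_three]

theorem signedTrace_fin_three_two (t : ℕ) (X : Matrix (Fin 3) (Fin 3) ℝ) :
    signedTrace t X 2 = X 0 2 + (-1) ^ t * (X 1 0 + X 2 1) := by
  simp [signedTrace, diagTraceR, Fin.sum_univ_three]

noncomputable def witnessQ₁ : Matrix (Fin 3) (Fin 3) ℝ :=
  !![1/3, 1/6, -1/6; 1/6, 1/3, 0; -1/6, 0, 1/3]

def witnessQ₁Factor : Matrix (Fin 4) (Fin 3) ℝ :=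
  !![1, 1, 0; 1, 0, -1; 0, 1, 0; 0, 0, 1]

theorem witnessQ₁_eq_gram : witnessQ₁ = (6 : ℝ)⁻¹ • (witnessQ₁Factorᵀ * witnessQ₁Factor) := by
  ext i j
  fin_cases i <;> fin_cases j <;>
    simp [witnessQ₁, witnessQ₁Factor, mul_apply, Fin.sum_univ_four] <;> norm_num

theorem witnessQ₁_posSemidef : witnessQ₁.PosSemidef := by
  rw [witnessQ₁_eq_gram]
  exact (posSemidef_conjTranspose_mul_self witnessQ₁Factor).smul (by norm_num)

theorem witnessQ₁_trace : witnessQ₁.trace = 1 := by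
  simp [witnessQ₁, trace, Fin.sum_univ_three]; norm_num

/-- The semidefinite program `S(2,3)` is feasible: there are real symmetric positive
semidefinite `3 × 3` matrices `Q₀, Q₁, Q₂` with `Q₀ = E/3`, `Q₂ = I/3`, `Tr Q₁ = 1`,
`𝒯₁ Q₁ = 𝒯₁ Q₀` and `𝒯₂ Q₂ = 𝒯₂ Q₁`. -/
theorem sdp_two_three_feasible :
    ∃ Q₀ Q₁ Q₂ : Matrix (Fin 3) (Fin 3) ℝ,
      Q₀.IsSymm ∧ Q₀.PosSemidef ∧ Q₁.IsSymm ∧ Q₁.PosSemidef ∧ Q₂.IsSymm ∧ Q₂.PosSemidef ∧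
      Q₀ = ((3 : ℝ))⁻¹ • Matrix.of (fun _ _ => (1 : ℝ)) ∧
      Q₂ = ((3 : ℝ))⁻¹ • (1 : Matrix (Fin 3) (Fin 3) ℝ) ∧
      Q₁.trace = 1 ∧
      (∀ i : ℤ, 1 ≤ i → i ≤ 2 → signedTrace 1 Q₁ i = signedTrace 1 Q₀ i) ∧
      (∀ i : ℤ, 1 ≤ i → i ≤ 2 → signedTrace 2 Q₂ i = signedTrace 2 Q₁ i) := by
  have hQ₀ : ((3 : ℝ)⁻¹ • Matrix.of fun _ _ : Fin 3 => (1 : ℝ)).PosSemidef :=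
    posSemidef_allOnes.smul (by norm_num)
  have hQ₂ : ((3 : ℝ)⁻¹ • (1 : Matrix (Fin 3) (Fin 3) ℝ)).PosSemidef :=
    PosSemidef.one.smul (by norm_num)
  refine ⟨_, witnessQ₁, _, hQ₀.isSymm, hQ₀, witnessQ₁_posSemidef.isSymm, witnessQ₁_posSemidef,
    hQ₂.isSymm, hQ₂, rfl, rfl, witnessQ₁_trace, ?_, ?_⟩ <;>
  · intro i hi₁ hi₂
    interval_cases i <;>
      simp [signedTrace_fin_three_one, signedTrace_fin_three_two, witnessQ₁, one_apply] <;>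
      norm_num
end
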